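/- Let X = {0,1}^ω be the Cantor space and x a fixed injective enumeration of the finitely supported elements of X with x_0 the identically-zero sequence. For every subset W ⊆ X the following are equivalent: (i) W is open in X; (ii) I_W is an analytic P-ideal (i.e., I_W is analytic as a subset of the Cantor space via characteristic functions and is a P-ideal); (iii) I_W is a P-ideal. -/

import Mathlib

open Set Topology MeasureTheory

/-- An ideal on `Z`: a family of subsets of `Z` closed under subsets and finite unions. -/
def IsIdeal {Z : Type*} (I : Set (Set Z)) : Prop :=
  (∀ A B : Set Z, A ⊆ B → B ∈ I → A ∈ I) ∧ ∀ A B : Set Z, A ∈ I → B ∈ I → A ∪ B ∈ I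

/-- An ideal is admissible if `Z ∉ I` and `I` contains all finite sets. -/
def IsAdmissible {Z : Type*} (I : Set (Set Z)) : Prop :=
  (Set.univ : Set Z) ∉ I ∧ ∀ A : Set Z, A.Finite → A ∈ I

/-- The subsequence of `x` indexed by the (infinite) set `A` converges to `η`:
all but finitely many of the indices in `A` give values inside any neighbourhood of `η`. -/
def ConvAlong {Z X : Type*} [TopologicalSpace X] (x : Z → X) (A : Set Z) (η : X) : Prop :=
  ∀ U ∈ nhds η, {n ∈ A | x n ∉ U}.Finite

/-- The set `Λ_x(I)` of `I`-limit points of the sequence `x`. -/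
def LambdaSet {Z X : Type*} [TopologicalSpace X] (x : Z → X) (I : Set (Set Z)) : Set X :=
  {η | ∃ A : Set Z, A ∉ I ∧ A.Infinite ∧ ConvAlong x A η}

/-- The family `𝓛_X(I)` of all sets of `I`-limit points of sequences in `X`, plus `∅`. -/
def LimitFamily (Z : Type*) (X : Type*) [TopologicalSpace X] (I : Set (Set Z)) : Set (Set X) :=
  {S | ∃ x : Z → X, S = LambdaSet x I} ∪ {∅}

/-- The Fubini product of two ideals. -/
def FubiniProd {Z W : Type*} (I : Set (Set Z)) (J : Set (Set W)) : Set (Set (Z × W)) :=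
  {S | {n : Z | {k : W | (n, k) ∈ S} ∉ J} ∈ I}

/-- The ideal `Fin` of finite subsets. -/
def FinIdeal (Z : Type*) : Set (Set Z) := {A : Set Z | A.Finite}

/-- Identification of a family of subsets of `Z` with a subset of the Cantor space
`Z → Bool` via characteristic functions. -/
def chiSet {Z : Type*} (I : Set (Set Z)) : Set (Z → Bool) :=
  {f | {n : Z | f n = true} ∈ I}

/-- Finite Borel pointclasses: `SigmaClass X n` is `Σ⁰_n` for `n ≥ 1`
(`Σ⁰₁` = open sets, `Σ⁰_{n+1}` = countable unions of complements of `Σ⁰_n` sets). -/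
def SigmaClass (X : Type*) [TopologicalSpace X] : ℕ → Set (Set X)
  | 0 => ∅
  | 1 => {s | IsOpen s}
  | (n + 2) => {s | ∃ f : ℕ → Set X, (∀ k, (f k)ᶜ ∈ SigmaClass X (n + 1)) ∧ s = ⋃ k, f k}

/-- `PiClass X n` is `Π⁰_n`: complements of `Σ⁰_n` sets. -/
def PiClass (X : Type*) [TopologicalSpace X] (n : ℕ) : Set (Set X) :=
  {s | sᶜ ∈ SigmaClass X n}

/-- Baire property: differs from an open set by a meager set. -/
def HasBP {α : Type*} [TopologicalSpace α] (s : Set α) : Prop :=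
  ∃ u : Set α, IsOpen u ∧ IsMeagre (symmDiff s u)

/-- Hereditary Baire property of an ideal on `ω`. -/
def HereditaryBP (I : Set (Set ℕ)) : Prop :=
  ∀ A : Set ℕ, A ∉ I → HasBP (chiSet {S : Set ℕ | ∃ T ∈ I, S = T ∩ A})

/-- Simply analytic subset of a topological space: the projection of a Borel subset of
`X × Y` for some uncountable Polish space `Y`. -/
def SAnalytic {X : Type*} [TopologicalSpace X] (A : Set X) : Prop :=
  ∃ (Y : Type) (tY : TopologicalSpace Y), @PolishSpace Y tY ∧ ¬Countable Y ∧
    ∃ B : Set (X × Y),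
      MeasurableSet[@borel (X × Y) (@instTopologicalSpaceProd X Y _ tY)] B ∧
      A = Prod.fst '' B

/-- `P⁺`-ideal. -/
def PPlusIdeal (I : Set (Set ℕ)) : Prop :=
  ∀ A : ℕ → Set ℕ, Antitone A → (∀ n, A n ∉ I) →
    ∃ B : Set ℕ, B ∉ I ∧ ∀ n, (B \ A n).Finite

/-- `P`-ideal. -/
def PIdeal (I : Set (Set ℕ)) : Prop :=
  ∀ A : ℕ → Set ℕ, (∀ n, A n ∈ I) → ∃ B ∈ I, ∀ n, (A n \ B).Finite

/-- `L_{x↾A}`: the set of limit points of the subsequence of `x` indexed by `A`. -/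
def LimSet {X : Type*} [TopologicalSpace X] (x : ℕ → X) (A : Set ℕ) : Set X :=
  {η | ∃ B ⊆ A, B.Infinite ∧ ConvAlong x B η}

/-- The ideal `I_W` attached to a sequence `x` and a set `W`. -/
def IdealW {X : Type*} [TopologicalSpace X] (x : ℕ → X) (W : Set X) : Set (Set ℕ) :=
  {A : Set ℕ | LimSet x A ∩ W = ∅}

/-- Rudin–Blass ordering on ideals. -/
def RudinBlassLE {Z W : Type*} (I : Set (Set Z)) (J : Set (Set W)) : Prop :=
  ∃ φ : W → Z, (∀ z : Z, (φ ⁻¹' {z}).Finite) ∧ ∀ S : Set Z, S ∈ I ↔ φ ⁻¹' S ∈ J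

/-- `Π⁰₃`-hardness of a subset of the Cantor space. -/
def Pi03Hard (B : Set (ℕ → Bool)) : Prop :=
  ∀ A ∈ PiClass (ℕ → Bool) 3, ∃ Φ : (ℕ → Bool) → (ℕ → Bool), Continuous Φ ∧ Φ ⁻¹' B = A


/-!
For open `W`, a set `A` lies in `I_W` iff `x` visits every compact `K ⊆ W` only finitely often
along `A`: compactness of `K` produces a limit point in `K`, and local compactness a compact
neighbourhood inside `W` of any limit point in `W`. Exhausting `W` by an increasing sequence of
compact sets `Kⱼ` turns `I_W` into `{A | ∀ j, A ∩ x⁻¹ Kⱼ finite}`, which is Borel and a P-ideal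
(given `Aₖ ∈ I_W`, take `⋃ₖ Aₖ \ x⁻¹ Kₖ`).

Conversely, `L_{x↾B}` is always closed. If `W` is not open, choose `ξₖ ∉ W` converging to some
`η ∈ W`, and sets `Aₖ` along which `x` converges to `ξₖ` (the range of `x` is dense). Each `Aₖ`
lies in `I_W`, and a `B ∈ I_W` almost containing every `Aₖ` has every `ξₖ`, hence `η`, in
`L_{x↾B}`.
-/

open Filter

section

variable {X : Type*} [TopologicalSpace X] {x : ℕ → X}

lemma ConvAlong.mono {A B : Set ℕ} {η : X} (h : ConvAlong x B η) (hAB : A ⊆ B) :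
    ConvAlong x A η :=
  fun U hU => (h U hU).subset fun _ hn => ⟨hAB hn.1, hn.2⟩

lemma ConvAlong.infinite_inter_preimage {B : Set ℕ} {η : X} {U : Set X}
    (h : ConvAlong x B η) (hB : B.Infinite) (hU : U ∈ 𝓝 η) : (B ∩ x ⁻¹' U).Infinite := by
  refine fun hfin => hB <| (hfin.union (h U hU)).subset fun n hn => ?_
  by_cases hnU : x n ∈ U
  exacts [Or.inl ⟨hn, hnU⟩, Or.inr ⟨hn, hnU⟩]

lemma convAlong_range_of_tendsto {c : ℕ → ℕ} {η : X} (h : Tendsto (x ∘ c) atTop (𝓝 η)) :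
    ConvAlong x (range c) η := by
  intro U hU
  have hfin : {k | x (c k) ∉ U}.Finite := by
    rw [← Nat.cofinite_eq_atTop] at h
    exact h hU
  refine (hfin.image c).subset ?_
  rintro _ ⟨⟨k, rfl⟩, hk⟩
  exact ⟨k, hk, rfl⟩

lemma infinite_inter_preimage_of_mem_limSet {A : Set ℕ} {η : X} {U : Set X}
    (hη : η ∈ LimSet x A) (hU : U ∈ 𝓝 η) : (A ∩ x ⁻¹' U).Infinite := by
  obtain ⟨B, hBA, hB, hconv⟩ := hη
  exact (hconv.infinite_inter_preimage hB hU).mono (inter_subset_inter_left _ hBA)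

lemma mem_limSet_of_forall_infinite [FirstCountableTopology X] {A : Set ℕ} {η : X}
    (h : ∀ U ∈ 𝓝 η, (A ∩ x ⁻¹' U).Infinite) : η ∈ LimSet x A := by
  obtain ⟨V, hV⟩ := (𝓝 η).exists_antitone_basis
  obtain ⟨c, hc, hcV⟩ := extraction_forall_of_frequently fun k =>
    Nat.frequently_atTop_iff_infinite.2 (h _ (hV.mem k))
  exact ⟨range c, range_subset_iff.2 fun k => (hcV k).1, infinite_range_of_injective hc.injective,
    convAlong_range_of_tendsto (hV.tendsto fun k => (hcV k).2)⟩

lemma isClosed_limSet [FirstCountableTopology X] (A : Set ℕ) : IsClosed (LimSet x A) := by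
  refine isClosed_iff_nhds.2 fun η h => mem_limSet_of_forall_infinite fun U hU => ?_
  obtain ⟨V, hVU, hVo, hηV⟩ := mem_nhds_iff.1 hU
  obtain ⟨ζ, hζV, hζ⟩ := h V (hVo.mem_nhds hηV)
  exact (infinite_inter_preimage_of_mem_limSet hζ (hVo.mem_nhds hζV)).mono
    (inter_subset_inter_right _ (preimage_mono hVU))

lemma mem_idealW_of_convAlong [T2Space X] {A : Set ℕ} {ξ : X} {W : Set X}
    (hA : ConvAlong x A ξ) (hξ : ξ ∉ W) : A ∈ IdealW x W := by
  refine eq_empty_iff_forall_notMem.2 fun η ⟨hηA, hηW⟩ => ?_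
  obtain rfl | hne := eq_or_ne η ξ
  · exact hξ hηW
  obtain ⟨U, V, hU, hV, hUV⟩ := t2_separation_nhds hne
  refine (infinite_inter_preimage_of_mem_limSet hηA hU).not_finite <| (hA V hV).subset ?_
  exact fun n hn => ⟨hn.1, fun hnV => hUV.le_bot ⟨hn.2, hnV⟩⟩

lemma IsCompact.exists_mem_limSet [FirstCountableTopology X] {K : Set X} (hK : IsCompact K)
    {A : Set ℕ} (hA : (A ∩ x ⁻¹' K).Infinite) : ∃ η ∈ K, η ∈ LimSet x A := by
  by_contra! h
  have hfin : ∀ η ∈ K, ∃ U ∈ 𝓝 η, (A ∩ x ⁻¹' U).Finite := fun η hη => by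
    by_contra! hinf
    exact h η hη (mem_limSet_of_forall_infinite hinf)
  choose U hU hUfin using hfin
  obtain ⟨t, ht⟩ := hK.elim_nhds_subcover' U hU
  refine hA ((t.finite_toSet.biUnion fun η _ => hUfin η η.2).subset ?_)
  rintro n ⟨hnA, hnK⟩
  obtain ⟨η, hη, hnU⟩ := mem_iUnion₂.1 (ht hnK)
  exact mem_iUnion₂.2 ⟨η, hη, hnA, hnU⟩

lemma mem_idealW_iff_of_isOpen [FirstCountableTopology X] [LocallyCompactSpace X] {W : Set X}
    (hW : IsOpen W) {A : Set ℕ} :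
    A ∈ IdealW x W ↔ ∀ K, IsCompact K → K ⊆ W → (A ∩ x ⁻¹' K).Finite := by
  constructor
  · intro hA K hK hKW
    by_contra hinf
    obtain ⟨η, hηK, hη⟩ := hK.exists_mem_limSet hinf
    exact (eq_empty_iff_forall_notMem.1 hA) η ⟨hη, hKW hηK⟩
  · refine fun h => eq_empty_iff_forall_notMem.2 fun η ⟨hη, hηW⟩ => ?_
    obtain ⟨K, hK, hηK, hKW⟩ := exists_compact_subset hW hηW
    exact infinite_inter_preimage_of_mem_limSet hη (mem_interior_iff_mem_nhds.1 hηK) (h K hK hKW)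

lemma IsOpen.exists_monotone_isCompact_exhaustion [LocallyCompactSpace X]
    [SecondCountableTopology X] {W : Set X} (hW : IsOpen W) :
    ∃ K : ℕ → Set X, Monotone K ∧ (∀ j, IsCompact (K j)) ∧ (∀ j, K j ⊆ W) ∧
      ∀ L, IsCompact L → L ⊆ W → ∃ j, L ⊆ K j := by
  have := hW.locallyCompactSpace
  let E := CompactExhaustion.choice W
  refine ⟨fun j => (↑) '' E j, fun i j hij => image_mono (E.subset hij),
    fun j => (E.isCompact j).image continuous_subtype_val,
    fun j => (image_subset_range _ _).trans Subtype.range_coe.subset, fun L hL hLW => ?_⟩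
  have hL' : IsCompact ((↑) ⁻¹' L : Set W) := by
    rwa [Subtype.isCompact_iff, Subtype.image_preimage_coe, inter_eq_right.2 hLW]
  obtain ⟨j, hj⟩ := E.exists_superset_of_isCompact hL'
  exact ⟨j, fun η hη => ⟨⟨η, hLW hη⟩, hj hη, rfl⟩⟩

lemma IsOpen.exists_monotone_idealW_eq [LocallyCompactSpace X] [SecondCountableTopology X]
    {W : Set X} (hW : IsOpen W) :
    ∃ K : ℕ → Set X, Monotone K ∧ IdealW x W = {A | ∀ j, (A ∩ x ⁻¹' K j).Finite} := by
  obtain ⟨K, hKmono, hK, hKW, hLK⟩ := hW.exists_monotone_isCompact_exhaustion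
  refine ⟨K, hKmono, Set.ext fun A => (mem_idealW_iff_of_isOpen hW).trans ⟨fun h j =>
    h _ (hK j) (hKW j), fun h L hL hLW => ?_⟩⟩
  obtain ⟨j, hj⟩ := hLK L hL hLW
  exact (h j).subset (inter_subset_inter_right _ (preimage_mono hj))

lemma DenseRange.mem_limSet_univ [FirstCountableTopology X] [T1Space X] [PerfectSpace X]
    (hx : DenseRange x) (ξ : X) : ξ ∈ LimSet x univ := by
  refine mem_limSet_of_forall_infinite fun U hU hfin => ?_
  obtain ⟨_, hyU, ⟨n, rfl⟩, hnU⟩ := (hx.sdiff_finite (hfin.image x)).inter_open_nonempty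
    (interior U) isOpen_interior ⟨ξ, mem_interior_iff_mem_nhds.2 hU⟩
  exact hnU ⟨n, ⟨mem_univ n, interior_subset (s := U) hyU⟩, rfl⟩

lemma isOpen_of_pIdeal_idealW [FirstCountableTopology X] [T2Space X]
    (hx : ∀ ξ, ξ ∈ LimSet x univ) {W : Set X} (hP : PIdeal (IdealW x W)) : IsOpen W := by
  refine isClosed_compl_iff.1 (isClosed_of_closure_subset fun η hη => ?_)
  obtain ⟨ξ, hξW, hξη⟩ := mem_closure_iff_seq_limit.1 hη
  choose A _ hA hAconv using fun k => hx (ξ k)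
  obtain ⟨B, hB, hAB⟩ := hP A fun k => mem_idealW_of_convAlong (hAconv k) (hξW k)
  have hξB : ∀ k, ξ k ∈ LimSet x B := fun k => ⟨A k ∩ B, inter_subset_right,
    sdiff_sdiff_right_self (A k) B ▸ (hA k).sdiff (hAB k), (hAconv k).mono inter_subset_left⟩
  have hηB : η ∈ LimSet x B := (isClosed_limSet B).mem_of_tendsto hξη (.of_forall hξB)
  exact fun hηW => eq_empty_iff_forall_notMem.1 hB η ⟨hηB, hηW⟩

end

lemma pIdeal_setOf_forall_finite_inter {S : ℕ → Set ℕ} (hS : Monotone S) :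
    PIdeal {A | ∀ j, (A ∩ S j).Finite} := by
  intro A hA
  refine ⟨⋃ k, A k \ S k, fun j => ?_, fun k => (hA k k).subset ?_⟩
  · refine ((finite_lt_nat j).biUnion fun k _ => hA k j).subset ?_
    rintro n ⟨hn, hnS⟩
    obtain ⟨k, hkA, hkS⟩ := mem_iUnion.1 hn
    exact mem_iUnion₂.2 ⟨k, lt_of_not_ge fun hjk => hkS (hS hjk hnS), hkA, hnS⟩
  · rintro n ⟨hnA, hnB⟩
    exact ⟨hnA, by_contra fun hnS => hnB (mem_iUnion.2 ⟨k, hnA, hnS⟩)⟩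

lemma measurableSet_chiSet_setOf_forall_finite_inter (S : ℕ → Set ℕ) :
    MeasurableSet (chiSet {A : Set ℕ | ∀ j, (A ∩ S j).Finite}) := by
  have : chiSet {A : Set ℕ | ∀ j, (A ∩ S j).Finite} =
      ⋂ j, ⋃ m, ⋂ n, (fun f : ℕ → Bool => f n) ⁻¹' {b | b = true → n ∈ S j → n ≤ m} := by
    ext f
    simp [chiSet, finite_iff_bddAbove, bddAbove_def]
  rw [this]
  exact .iInter fun j => .iUnion fun m => .iInter fun n =>
    measurable_pi_apply n (MeasurableSet.of_discrete)

namespace PiNat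

variable {E : ℕ → Type*} [∀ n, TopologicalSpace (E n)] [∀ n, DiscreteTopology (E n)]

lemma exists_cylinder_subset_of_mem_nhds {ξ : ∀ n, E n} {U : Set (∀ n, E n)} (hU : U ∈ 𝓝 ξ) :
    ∃ N, cylinder ξ N ⊆ U := by
  obtain ⟨_, ⟨y, N, rfl⟩, hξ, hU⟩ := (isTopologicalBasis_cylinders E).mem_nhds_iff.1 hU
  exact ⟨N, mem_cylinder_iff_eq.1 hξ ▸ hU⟩

instance [∀ n, Nontrivial (E n)] : PerfectSpace (∀ n, E n) := by
  refine perfectSpace_iff_forall_not_isolated.2 fun ξ => mem_closure_iff_nhdsWithin_neBot.1 ?_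
  refine mem_closure_iff_nhds.2 fun U hU => ?_
  obtain ⟨N, hN⟩ := exists_cylinder_subset_of_mem_nhds hU
  obtain ⟨b, hb⟩ := exists_ne (ξ N)
  exact ⟨Function.update ξ N b, hN (update_mem_cylinder ξ N b),
    fun h => hb (by simpa using congrFun h N)⟩

end PiNat

lemma dense_setOf_finite_setOf_eq_true :
    Dense {f : ℕ → Bool | {k | f k = true}.Finite} := by
  refine fun ξ => mem_closure_iff_nhds.2 fun U hU => ?_
  obtain ⟨N, hN⟩ := PiNat.exists_cylinder_subset_of_mem_nhds hU
  refine ⟨fun i => decide (i < N) && ξ i, hN fun i hi => by simp [hi], ?_⟩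
  refine (finite_lt_nat N).subset fun i hi => ?_
  simp only [mem_ofPred_eq, Bool.and_eq_true, decide_eq_true_eq] at hi
  exact hi.1

theorem stmt16_general (x : ℕ → (ℕ → Bool))
    (hrange : Set.range x = {f : ℕ → Bool | {k : ℕ | f k = true}.Finite})
    (W : Set (ℕ → Bool)) :
    (IsOpen W ↔ (MeasureTheory.AnalyticSet (chiSet (IdealW x W)) ∧ PIdeal (IdealW x W))) ∧
    (IsOpen W ↔ PIdeal (IdealW x W)) := by
  -- instance search does not reach `PolishSpace (ℕ → Bool)` unaided
  have : PolishSpace Bool := inferInstance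
  have hx : DenseRange x := by
    rw [DenseRange, hrange]
    exact dense_setOf_finite_setOf_eq_true
  have hopen (hW : IsOpen W) : MeasurableSet (chiSet (IdealW x W)) ∧ PIdeal (IdealW x W) := by
    obtain ⟨K, hK, hIW⟩ := hW.exists_monotone_idealW_eq (x := x)
    rw [hIW]
    exact ⟨measurableSet_chiSet_setOf_forall_finite_inter _,
      pIdeal_setOf_forall_finite_inter fun i j hij => preimage_mono (hK hij)⟩
  have hP : PIdeal (IdealW x W) → IsOpen W := isOpen_of_pIdeal_idealW hx.mem_limSet_univ
  exact ⟨⟨fun hW => ⟨(hopen hW).1.analyticSet, (hopen hW).2⟩, fun h => hP h.2⟩,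
    ⟨fun hW => (hopen hW).2, hP⟩⟩

/-- `W` is open iff `I_W` is an analytic `P`-ideal iff `I_W` is a `P`-ideal. -/
theorem stmt16 (x : ℕ → (ℕ → Bool)) (hinj : Function.Injective x)
    (hrange : Set.range x = {f : ℕ → Bool | {k : ℕ | f k = true}.Finite})
    (hzero : x 0 = fun _ => false)
    (W : Set (ℕ → Bool)) :
    (IsOpen W ↔ (MeasureTheory.AnalyticSet (chiSet (IdealW x W)) ∧ PIdeal (IdealW x W))) ∧
    (IsOpen W ↔ PIdeal (IdealW x W)) :=
  stmt16_general x hrange W
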